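/- Let V be the operator of left wedge multiplication by a fixed odd-degree real form on the complexified exterior algebra of an oriented odd-dimensional real inner product space, and let A = V^⋆ be its super-adjoint. Then A = * ∘ V ∘ * where * is the Hodge star, and the operators iV and A both preserve the odd pairing ⟨α,β⟩·Ω = α ∧ conj(β) in the super sense: ⟨φ(α),β⟩ + (-1)^{deg(α)deg(φ)}⟨α,φ(β)⟩ = 0. -/

import Mathlib

/-!
In odd dimension the Hodge star `⋆` is an involution, symmetric for the Hermitian product, and
`(α, ⋆β) = ⟨α, β⟩` is the odd pairing (coefficient of `Ω` in `α ∧ conj β`); all three are checked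
on monomials, where `⋆ e_t = c e_{tᶜ}` with `e_t ∧ e_{tᶜ} = c Ω`, `c = ±1`, and `e_{tᶜ}` commutes
with `e_t` because `|t| (n - |t|)` is even. Moving `ω` across a `k`-form costs `(-1)^(pk)` and
`conj ω = ω`, so `(α, ⋆(ω ∧ ⋆β)) = (-1)^(pk) (ω ∧ α, β)`: `⋆V⋆` is a super-adjoint of `V`, and
super-adjoints are unique by nondegeneracy. The same commutation with `conj i = -i` shows that
`iV` preserves the odd pairing. For `A = ⋆V⋆` both terms of the pairing identity become multiples
of `(ω ∧ ⋆α, β)`, with signs `1` and `(-1)^(pk) (-1)^(p(n-k)) = -1` since `p` and `n` are odd.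
-/

open ExteriorAlgebra

/-- Basis monomial of the complexified exterior algebra. -/
noncomputable def cMonomial {n : ℕ} {V : Type*} [AddCommGroup V] [Module ℂ V]
    (b : Module.Basis (Fin n) ℂ V) (s : Finset (Fin n)) : ExteriorAlgebra ℂ V :=
  ((s.sort (· ≤ ·)).map fun i => ι ℂ (b i)).prod

theorem neg_one_pow_mul_neg_one_pow {R : Type*} [Monoid R] [HasDistribNeg R] (m : ℕ) :
    (-1 : R) ^ m * (-1) ^ m = 1 := by
  rw [← pow_add, ← two_mul, pow_mul, neg_one_sq, one_pow]

theorem Finset.eq_compl_of_disjoint_of_card_add_eq {α : Type*} [Fintype α] [DecidableEq α]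
    {s t : Finset α} (h : Disjoint s t) (hcard : s.card + t.card = Fintype.card α) : s = tᶜ :=
  Finset.eq_of_subset_of_card_le (Finset.subset_compl_iff_disjoint_right.mpr h)
    (by rw [Finset.card_compl]; omega)

theorem LinearMap.eq_self_of_mem_span_real {M ι : Type*} [AddCommGroup M] [Module ℂ M]
    (cj : M →ₛₗ[starRingEnd ℂ] M) {v : ι → M} (hv : ∀ i, cj (v i) = v i) {x : M}
    (hx : x ∈ Submodule.span ℝ (Set.range v)) : cj x = x := by
  induction hx using Submodule.span_induction with
  | mem _ h => obtain ⟨i, rfl⟩ := h; exact hv i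
  | zero => exact map_zero cj
  | add x y _ _ hx hy => rw [map_add, hx, hy]
  | smul r x _ hx => rw [← Complex.coe_smul, LinearMap.map_smulₛₗ, Complex.conj_ofReal, hx]

namespace ExteriorAlgebra

variable {R M : Type*} [CommRing R] [AddCommGroup M] [Module R M]

theorem ι_mul_comm_of_mem_exteriorPower (m : M) {q : ℕ} {y : ExteriorAlgebra R M}
    (hy : y ∈ ⋀[R]^q M) : ι R m * y = (-1 : R) ^ q • (y * ι R m) := by
  induction hy using Submodule.pow_induction_on_left' with
  | algebraMap r => simp [Algebra.commutes]
  | add x y i _ _ hx hy => simp only [mul_add, add_mul, hx, hy, smul_add]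
  | mem_mul v hv i x _ hx =>
    obtain ⟨w, rfl⟩ := hv
    have hswap : ι R m * ι R w = -(ι R w * ι R m) := eq_neg_of_add_eq_zero_left (ι_add_mul_swap m w)
    rw [← mul_assoc, hswap, neg_mul, mul_assoc, hx, mul_smul_comm, ← mul_assoc, pow_succ,
      mul_neg_one, neg_smul, ← neg_smul]

theorem mul_comm_of_mem_exteriorPower {p q : ℕ} {x y : ExteriorAlgebra R M}
    (hx : x ∈ ⋀[R]^p M) (hy : y ∈ ⋀[R]^q M) : x * y = (-1 : R) ^ (p * q) • (y * x) := by
  induction hx using Submodule.pow_induction_on_left' with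
  | algebraMap r => simp [Algebra.commutes]
  | add x x' i _ _ hx hx' => simp only [add_mul, mul_add, hx, hx', smul_add]
  | mem_mul v hv i x _ hx =>
    obtain ⟨w, rfl⟩ := hv
    rw [mul_assoc, hx, mul_smul_comm, ← mul_assoc, ι_mul_comm_of_mem_exteriorPower w hy,
      smul_mul_assoc, smul_smul, mul_assoc, ← pow_add, Nat.succ_mul, add_comm]

variable {I : Type*} [LinearOrder I] (b : Module.Basis I R M)

theorem basis_repr_eq_zero_of_mem_exteriorPower {k : ℕ} {x : ExteriorAlgebra R M}
    (hx : x ∈ ⋀[R]^k M) {s : Finset I} (hs : s.card ≠ k) : b.ExteriorAlgebra.repr x s = 0 := by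
  rw [Module.Basis.ExteriorAlgebra, Module.Basis.repr_reindex_apply]
  exact DirectSum.IsInternal.collectedBasis_repr_of_mem_ne _ _ (Ne.symm hs) hx

end ExteriorAlgebra

section cMonomial

variable {n : ℕ} {V : Type*} [AddCommGroup V] [Module ℂ V] (b : Module.Basis (Fin n) ℂ V)

theorem basis_exteriorAlgebra_eq_cMonomial (s : Finset (Fin n)) :
    b.ExteriorAlgebra s = cMonomial b s := by
  rw [ExteriorAlgebra.basis_apply_ofCard b (rfl : s.card = s.card)]
  simp only [ιMulti_apply, cMonomial, Function.comp_apply,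
    Set.powersetCard.ofFinEmbEquiv_symm_apply]
  congr 1
  apply List.ext_getElem <;> simp [Finset.orderEmbOfFin_apply]

theorem cMonomial_mem_exteriorPower (s : Finset (Fin n)) : cMonomial b s ∈ ⋀[ℂ]^s.card V := by
  rw [← basis_exteriorAlgebra_eq_cMonomial, ExteriorAlgebra.basis_apply_ofCard b rfl]
  exact ExteriorAlgebra.ιMulti_range ℂ _ ⟨_, rfl⟩

theorem cMonomial_ne_zero (s : Finset (Fin n)) : cMonomial b s ≠ 0 := by
  rw [← basis_exteriorAlgebra_eq_cMonomial]
  exact b.ExteriorAlgebra.ne_zero s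

theorem cMonomial_mul_of_not_disjoint {s t : Finset (Fin n)} (h : ¬Disjoint s t) :
    cMonomial b s * cMonomial b t = 0 := by
  have := ExteriorAlgebra.basis_mul_of_not_disjoint b
    (Set.powersetCard.ofCard (rfl : s.card = s.card))
    (Set.powersetCard.ofCard (rfl : t.card = t.card)) h
  rwa [basis_exteriorAlgebra_eq_cMonomial, basis_exteriorAlgebra_eq_cMonomial] at this

theorem exists_cMonomial_mul_of_disjoint {s t : Finset (Fin n)} (h : Disjoint s t) :
    ∃ c : ℂ, (c = 1 ∨ c = -1) ∧ cMonomial b s * cMonomial b t = c • cMonomial b (s ∪ t) := by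
  have := ExteriorAlgebra.basis_mul_of_disjoint b (Set.powersetCard.ofCard (rfl : s.card = s.card))
      (Set.powersetCard.ofCard (rfl : t.card = t.card)) h
  simp only [basis_exteriorAlgebra_eq_cMonomial] at this
  obtain ⟨σ, hσ⟩ : ∃ σ : ℤˣ, cMonomial b s * cMonomial b t = σ • cMonomial b (s ∪ t) :=
    ⟨_, this.trans (by congr 2; exact Finset.disjUnion_eq_union s t h)⟩
  refine ⟨((σ : ℤ) : ℂ), ?_, by rw [hσ, Units.smul_def, Int.cast_smul_eq_zsmul]⟩
  rcases Int.units_eq_one_or σ with rfl | rfl <;> simp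

theorem exists_cMonomial_mul_compl (t : Finset (Fin n)) :
    ∃ c : ℂ, (c = 1 ∨ c = -1) ∧ cMonomial b t * cMonomial b tᶜ = c • cMonomial b Finset.univ := by
  simpa only [Finset.union_compl] using exists_cMonomial_mul_of_disjoint b disjoint_compl_right

theorem exteriorPower_le_span_cMonomial (k : ℕ) :
    ⋀[ℂ]^k V ≤ Submodule.span ℂ (cMonomial b '' {s | s.card = k}) := by
  intro x hx
  rw [← b.ExteriorAlgebra.sum_repr x]
  refine Submodule.sum_mem _ fun s _ => ?_
  by_cases hs : s.card = k
  · exact Submodule.smul_mem _ _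
      (Submodule.subset_span ⟨s, hs, (basis_exteriorAlgebra_eq_cMonomial b s).symm⟩)
  · rw [ExteriorAlgebra.basis_repr_eq_zero_of_mem_exteriorPower b hx hs, zero_smul]
    exact Submodule.zero_mem _

theorem exteriorPower_eq_bot_of_lt (b : Module.Basis (Fin n) ℂ V) {k : ℕ} (hk : n < k) :
    ⋀[ℂ]^k V = ⊥ := by
  refine eq_bot_iff.mpr ((exteriorPower_le_span_cMonomial b k).trans ?_)
  have : {s : Finset (Fin n) | s.card = k} = ∅ :=
    Set.eq_empty_of_forall_notMem fun s (hs : s.card = k) => by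
      have := s.card_le_univ; simp only [Fintype.card_fin] at this; exact absurd hs (by omega)
  rw [this, Set.image_empty, Submodule.span_empty]

theorem eq_zero_of_forall_cMonomial_mul_eq_zero {j : ℕ} {y : ExteriorAlgebra ℂ V}
    (hy : y ∈ ⋀[ℂ]^j V) (h : ∀ r : Finset (Fin n), r.card = n - j → cMonomial b r * y = 0) :
    y = 0 := by
  refine b.ExteriorAlgebra.ext_elem fun s => ?_
  rw [map_zero, Finsupp.zero_apply]
  by_cases hs : s.card = j
  swap
  · exact ExteriorAlgebra.basis_repr_eq_zero_of_mem_exteriorPower b hy hs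
  obtain ⟨c, hc, hmul⟩ := exists_cMonomial_mul_of_disjoint b (disjoint_compl_left : Disjoint sᶜ s)
  have hextract :
      cMonomial b sᶜ * y = (b.ExteriorAlgebra.repr y s * c) • cMonomial b Finset.univ := by
    conv_lhs => rw [← b.ExteriorAlgebra.sum_repr y]
    rw [Finset.mul_sum, Finset.sum_eq_single s]
    · rw [mul_smul_comm, basis_exteriorAlgebra_eq_cMonomial, hmul, Finset.union_comm,
        Finset.union_compl, smul_smul]
    · intro u _ hus
      rw [mul_smul_comm]
      by_cases hu : u.card = j
      · rw [basis_exteriorAlgebra_eq_cMonomial, cMonomial_mul_of_not_disjoint b, smul_zero]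
        intro hdisj
        refine hus (compl_injective (Finset.eq_compl_of_disjoint_of_card_add_eq hdisj ?_).symm)
        rw [Finset.card_compl, Fintype.card_fin, hu, ← hs]
        have := s.card_le_univ; simp only [Fintype.card_fin] at this; omega
      · rw [ExteriorAlgebra.basis_repr_eq_zero_of_mem_exteriorPower b hy hu, zero_smul]
    · simp
  rw [h sᶜ (by rw [Finset.card_compl, Fintype.card_fin, hs]), eq_comm, smul_eq_zero] at hextract
  rcases hextract with hzero | hΩ
  · exact (mul_eq_zero.mp hzero).resolve_right (by rcases hc with rfl | rfl <;> norm_num)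
  · exact absurd hΩ (cMonomial_ne_zero b _)

end cMonomial

section HodgeStar

variable {n : ℕ} {V : Type*} [AddCommGroup V] [Module ℂ V] (b : Module.Basis (Fin n) ℂ V)

structure IsHodgeStar (st : ExteriorAlgebra ℂ V →ₗ[ℂ] ExteriorAlgebra ℂ V) : Prop where
  mem_exteriorPower : ∀ s : Finset (Fin n), st (cMonomial b s) ∈ ⋀[ℂ]^(n - s.card) V
  cMonomial_mul : ∀ s t : Finset (Fin n), s.card = t.card →
    cMonomial b s * st (cMonomial b t) = (if s = t then (1 : ℂ) else 0) • cMonomial b Finset.univ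

variable {b} {st : ExteriorAlgebra ℂ V →ₗ[ℂ] ExteriorAlgebra ℂ V}

theorem IsHodgeStar.apply_cMonomial (hst : IsHodgeStar b st) {t : Finset (Fin n)} {c : ℂ}
    (hsign : c = 1 ∨ c = -1) (hc : cMonomial b t * cMonomial b tᶜ = c • cMonomial b Finset.univ) :
    st (cMonomial b t) = c • cMonomial b tᶜ := by
  have ht : t.card ≤ n := by simpa using t.card_le_univ
  rw [← sub_eq_zero]
  refine eq_zero_of_forall_cMonomial_mul_eq_zero b (j := n - t.card)
    (Submodule.sub_mem _ (hst.mem_exteriorPower t) (Submodule.smul_mem _ _ ?_)) fun r hr => ?_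
  · simpa [Finset.card_compl] using cMonomial_mem_exteriorPower b tᶜ
  rw [mul_sub, hst.cMonomial_mul r t (by omega), mul_smul_comm]
  by_cases hrt : r = t
  · rw [hrt, hc, smul_smul, if_pos rfl, sub_eq_zero]
    rcases hsign with rfl | rfl <;> norm_num
  · rw [if_neg hrt, cMonomial_mul_of_not_disjoint b, zero_smul, smul_zero, sub_zero]
    intro hdisj
    refine hrt (compl_compl t ▸ Finset.eq_compl_of_disjoint_of_card_add_eq hdisj ?_)
    rw [Finset.card_compl, Fintype.card_fin]
    omega

theorem cMonomial_compl_mul_cMonomial (hn : Odd n) (t : Finset (Fin n)) :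
    cMonomial b tᶜ * cMonomial b t = cMonomial b t * cMonomial b tᶜ := by
  have ht : t.card ≤ n := by simpa using t.card_le_univ
  rw [mul_comm_of_mem_exteriorPower (cMonomial_mem_exteriorPower b tᶜ)
    (cMonomial_mem_exteriorPower b t)]
  suffices Even (tᶜ.card * t.card) by rw [this.neg_one_pow, one_smul]
  rw [Finset.card_compl, Fintype.card_fin, Nat.even_mul]
  rcases Nat.even_or_odd t.card with h | h
  · exact Or.inr h
  · exact Or.inl (Nat.Odd.sub_odd hn h)

theorem IsHodgeStar.apply_cMonomial_compl (hst : IsHodgeStar b st) (hn : Odd n)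
    {t : Finset (Fin n)} {c : ℂ} (hsign : c = 1 ∨ c = -1)
    (hc : cMonomial b t * cMonomial b tᶜ = c • cMonomial b Finset.univ) :
    st (cMonomial b tᶜ) = c • cMonomial b t := by
  simpa using hst.apply_cMonomial hsign (t := tᶜ)
    (by rw [compl_compl, cMonomial_compl_mul_cMonomial hn, hc])

theorem IsHodgeStar.apply_apply (hst : IsHodgeStar b st) (hn : Odd n)
    (x : ExteriorAlgebra ℂ V) : st (st x) = x := by
  suffices st ∘ₗ st = LinearMap.id from LinearMap.congr_fun this x
  refine b.ExteriorAlgebra.ext fun t => ?_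
  obtain ⟨c, hsign, hc⟩ := exists_cMonomial_mul_compl b t
  rw [basis_exteriorAlgebra_eq_cMonomial, LinearMap.comp_apply, hst.apply_cMonomial hsign hc,
    map_smul, hst.apply_cMonomial_compl hn hsign hc, smul_smul, LinearMap.id_apply]
  rcases hsign with rfl | rfl <;> norm_num

theorem IsHodgeStar.apply_mem_exteriorPower (hst : IsHodgeStar b st) {k : ℕ}
    {x : ExteriorAlgebra ℂ V} (hx : x ∈ ⋀[ℂ]^k V) : st x ∈ ⋀[ℂ]^(n - k) V := by
  refine Submodule.span_le (p := (⋀[ℂ]^(n - k) V).comap st) |>.mpr ?_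
    (exteriorPower_le_span_cMonomial b k hx)
  rintro _ ⟨s, rfl, rfl⟩
  exact hst.mem_exteriorPower s

end HodgeStar

section InnerProduct

variable {n : ℕ} {V : Type*} [AddCommGroup V] [Module ℂ V] {b : Module.Basis (Fin n) ℂ V}
  {B : ExteriorAlgebra ℂ V →ₗ[ℂ] ExteriorAlgebra ℂ V →ₗ⋆[ℂ] ℂ}

theorem inner_cMonomial_right
    (hB : ∀ s t, B (cMonomial b s) (cMonomial b t) = if s = t then 1 else 0)
    (x : ExteriorAlgebra ℂ V) (s : Finset (Fin n)) :
    B x (cMonomial b s) = b.ExteriorAlgebra.repr x s := by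
  conv_lhs => rw [← b.ExteriorAlgebra.sum_repr x]
  simp [basis_exteriorAlgebra_eq_cMonomial, hB]

theorem inner_cMonomial_left
    (hB : ∀ s t, B (cMonomial b s) (cMonomial b t) = if s = t then 1 else 0)
    (s : Finset (Fin n)) (x : ExteriorAlgebra ℂ V) :
    B (cMonomial b s) x = starRingEnd ℂ (b.ExteriorAlgebra.repr x s) := by
  conv_lhs => rw [← b.ExteriorAlgebra.sum_repr x]
  simp [basis_exteriorAlgebra_eq_cMonomial, hB]

theorem eq_of_forall_inner_cMonomial_left_eq
    (hB : ∀ s t, B (cMonomial b s) (cMonomial b t) = if s = t then 1 else 0)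
    {x y : ExteriorAlgebra ℂ V} (h : ∀ s, B (cMonomial b s) x = B (cMonomial b s) y) : x = y :=
  b.ExteriorAlgebra.ext_elem fun s =>
    (starRingEnd ℂ).injective <| by simpa only [inner_cMonomial_left hB] using h s

variable {st : ExteriorAlgebra ℂ V →ₗ[ℂ] ExteriorAlgebra ℂ V}

theorem IsHodgeStar.inner_apply_left_eq_inner_apply_right (hst : IsHodgeStar b st) (hn : Odd n)
    (hB : ∀ s t, B (cMonomial b s) (cMonomial b t) = if s = t then 1 else 0)
    (x y : ExteriorAlgebra ℂ V) : B (st x) y = B x (st y) := by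
  suffices B ∘ₗ st = B.compl₂ st from LinearMap.congr_fun₂ this x y
  refine LinearMap.ext_basis b.ExteriorAlgebra b.ExteriorAlgebra fun s t => ?_
  obtain ⟨c, hsign, hc⟩ := exists_cMonomial_mul_compl b s
  simp only [basis_exteriorAlgebra_eq_cMonomial, LinearMap.comp_apply, LinearMap.compl₂_apply]
  rw [hst.apply_cMonomial hsign hc]
  by_cases hts : t = sᶜ
  · rw [hts, hst.apply_cMonomial_compl hn hsign hc]
    rcases hsign with rfl | rfl <;> simp [hB]
  · obtain ⟨c', hsign', hc'⟩ := exists_cMonomial_mul_compl b t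
    rw [hst.apply_cMonomial hsign' hc']
    simp [hB, Ne.symm hts, show s ≠ tᶜ from fun h => hts (by rw [h, compl_compl])]

theorem inner_cMonomial_mul_cMonomial_univ_of_ne_compl
    (hB : ∀ s t, B (cMonomial b s) (cMonomial b t) = if s = t then 1 else 0)
    {s t : Finset (Fin n)} (hst : s ≠ tᶜ) :
    B (cMonomial b s * cMonomial b t) (cMonomial b Finset.univ) = 0 := by
  rw [inner_cMonomial_right hB]
  by_cases hcard : s.card + t.card = n
  · rw [cMonomial_mul_of_not_disjoint b fun hdisj => hst
      (Finset.eq_compl_of_disjoint_of_card_add_eq hdisj (by simpa using hcard)), map_zero,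
      Finsupp.zero_apply]
  · exact ExteriorAlgebra.basis_repr_eq_zero_of_mem_exteriorPower b
      (SetLike.GradedMul.mul_mem (cMonomial_mem_exteriorPower b s)
        (cMonomial_mem_exteriorPower b t)) (by simpa [eq_comm] using hcard)

theorem IsHodgeStar.inner_apply_right_eq_inner_mul_conj (hst : IsHodgeStar b st) (hn : Odd n)
    (hB : ∀ s t, B (cMonomial b s) (cMonomial b t) = if s = t then 1 else 0)
    {cj : ExteriorAlgebra ℂ V →ₛₗ[starRingEnd ℂ] ExteriorAlgebra ℂ V}
    (cj_mon : ∀ s, cj (cMonomial b s) = cMonomial b s) (x y : ExteriorAlgebra ℂ V) :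
    B x (st y) = B (x * cj y) (cMonomial b Finset.univ) := by
  suffices B.compl₂ st = ((LinearMap.mul ℂ _).compr₂ (B.flip (cMonomial b Finset.univ))).compl₂ cj
    from LinearMap.congr_fun₂ this x y
  refine LinearMap.ext_basis b.ExteriorAlgebra b.ExteriorAlgebra fun s t => ?_
  obtain ⟨c, hsign, hc⟩ := exists_cMonomial_mul_compl b t
  simp only [basis_exteriorAlgebra_eq_cMonomial, LinearMap.compl₂_apply, LinearMap.compr₂_apply,
    LinearMap.mul_apply', LinearMap.flip_apply, cj_mon, hst.apply_cMonomial hsign hc]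
  by_cases hs : s = tᶜ
  · rw [hs, cMonomial_compl_mul_cMonomial hn, hc]
    rcases hsign with rfl | rfl <;> simp [hB]
  · simp [hB, hs, inner_cMonomial_mul_cMonomial_univ_of_ne_compl hB hs]

end InnerProduct

section SuperAdjoint

variable {n : ℕ} {V : Type*} [AddCommGroup V] [Module ℂ V]

def IsSuperAdjointMulLeft (B : ExteriorAlgebra ℂ V →ₗ[ℂ] ExteriorAlgebra ℂ V →ₗ⋆[ℂ] ℂ) (p : ℕ)
    (ω : ExteriorAlgebra ℂ V) (A : ExteriorAlgebra ℂ V →ₗ[ℂ] ExteriorAlgebra ℂ V) : Prop :=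
  ∀ (k : ℕ) (α : ExteriorAlgebra ℂ V), α ∈ ⋀[ℂ]^k V →
    ∀ β, B (ω * α) β = (-1 : ℂ) ^ (p * k) * B α (A β)

def IsSuperSkew (P : ExteriorAlgebra ℂ V → ExteriorAlgebra ℂ V → ℂ) (p : ℕ)
    (φ : ExteriorAlgebra ℂ V → ExteriorAlgebra ℂ V) : Prop :=
  ∀ (k : ℕ) (α : ExteriorAlgebra ℂ V), α ∈ ⋀[ℂ]^k V →
    ∀ β, P (φ α) β + (-1 : ℂ) ^ (p * k) * P α (φ β) = 0

theorem isSuperSkew_I_smul_mul_left (f : ExteriorAlgebra ℂ V →ₗ[ℂ] ℂ)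
    {cj : ExteriorAlgebra ℂ V →ₛₗ[starRingEnd ℂ] ExteriorAlgebra ℂ V}
    (cj_mul : ∀ x y, cj (x * y) = cj x * cj y) {p : ℕ} {ω : ExteriorAlgebra ℂ V}
    (hω : ω ∈ ⋀[ℂ]^p V) (hωcj : cj ω = ω) :
    IsSuperSkew (fun x y => f (x * cj y)) p fun x => Complex.I • (ω * x) := by
  intro k α hα β
  have hcomm : α * ω = (-1 : ℂ) ^ (p * k) • (ω * α) := by
    rw [mul_comm_of_mem_exteriorPower hα hω, mul_comm k p]
  simp only [smul_mul_assoc, map_smul, LinearMap.map_smulₛₗ, cj_mul, hωcj, Complex.conj_I,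
    mul_smul_comm, ← mul_assoc, hcomm, smul_eq_mul]
  linear_combination (-Complex.I * f (ω * α * cj β)) * neg_one_pow_mul_neg_one_pow (R := ℂ) (p * k)

variable {b : Module.Basis (Fin n) ℂ V} {B : ExteriorAlgebra ℂ V →ₗ[ℂ] ExteriorAlgebra ℂ V →ₗ⋆[ℂ] ℂ}
  {st : ExteriorAlgebra ℂ V →ₗ[ℂ] ExteriorAlgebra ℂ V}
  {cj : ExteriorAlgebra ℂ V →ₛₗ[starRingEnd ℂ] ExteriorAlgebra ℂ V}
  {p : ℕ} {ω : ExteriorAlgebra ℂ V} {A : ExteriorAlgebra ℂ V →ₗ[ℂ] ExteriorAlgebra ℂ V}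

theorem IsSuperAdjointMulLeft.unique
    (hB : ∀ s t, B (cMonomial b s) (cMonomial b t) = if s = t then 1 else 0)
    {A' : ExteriorAlgebra ℂ V →ₗ[ℂ] ExteriorAlgebra ℂ V} (hA : IsSuperAdjointMulLeft B p ω A)
    (hA' : IsSuperAdjointMulLeft B p ω A') : A = A' := by
  refine LinearMap.ext fun β => eq_of_forall_inner_cMonomial_left_eq hB fun s => ?_
  have hs := cMonomial_mem_exteriorPower b s
  have h := (hA _ _ hs β).symm.trans (hA' _ _ hs β)
  rwa [mul_right_inj' (pow_ne_zero _ (neg_ne_zero.mpr one_ne_zero))] at h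

theorem IsHodgeStar.isSuperAdjointMulLeft (hst : IsHodgeStar b st) (hn : Odd n)
    (hB : ∀ s t, B (cMonomial b s) (cMonomial b t) = if s = t then 1 else 0)
    (cj_mon : ∀ s, cj (cMonomial b s) = cMonomial b s) (cj_mul : ∀ x y, cj (x * y) = cj x * cj y)
    (hω : ω ∈ ⋀[ℂ]^p V) (hωcj : cj ω = ω) :
    IsSuperAdjointMulLeft B p ω (st ∘ₗ LinearMap.mulLeft ℂ ω ∘ₗ st) := by
  intro k α hα β
  calc B (ω * α) β
      = B (ω * α * cj (st β)) (cMonomial b Finset.univ) := by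
        rw [← hst.inner_apply_right_eq_inner_mul_conj hn hB cj_mon, hst.apply_apply hn]
    _ = (-1 : ℂ) ^ (p * k) * B (α * (ω * cj (st β))) (cMonomial b Finset.univ) := by
        rw [mul_comm_of_mem_exteriorPower hω hα, smul_mul_assoc, map_smul, LinearMap.smul_apply,
          smul_eq_mul, mul_assoc]
    _ = (-1 : ℂ) ^ (p * k) * B α (st (ω * st β)) := by
        rw [hst.inner_apply_right_eq_inner_mul_conj hn hB cj_mon, cj_mul, hωcj]

theorem IsSuperAdjointMulLeft.isSuperSkew (hA : IsSuperAdjointMulLeft B p ω A)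
    (hst : IsHodgeStar b st) (hn : Odd n)
    (hB : ∀ s t, B (cMonomial b s) (cMonomial b t) = if s = t then 1 else 0)
    (cj_mon : ∀ s, cj (cMonomial b s) = cMonomial b s) (cj_mul : ∀ x y, cj (x * y) = cj x * cj y)
    (hp : Odd p) (hω : ω ∈ ⋀[ℂ]^p V) (hωcj : cj ω = ω) :
    IsSuperSkew (fun x y => B (x * cj y) (cMonomial b Finset.univ)) p A := by
  intro k α hα β
  obtain hk | hk := le_or_gt k n
  swap
  · rw [exteriorPower_eq_bot_of_lt b hk, Submodule.mem_bot] at hα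
    simp [hα]
  have hAα : A α = st (ω * st α) :=
    LinearMap.congr_fun (hA.unique hB (hst.isSuperAdjointMulLeft hn hB cj_mon cj_mul hω hωcj)) α
  have hsign : (-1 : ℂ) ^ (p * (n - k)) * (-1) ^ (p * k) = -1 := by
    rw [← pow_add, ← mul_add, Nat.sub_add_cancel hk, (hp.mul hn).neg_one_pow]
  simp only [← hst.inner_apply_right_eq_inner_mul_conj hn hB cj_mon]
  rw [hAα, hst.inner_apply_left_eq_inner_apply_right hn hB, hst.apply_apply hn,
    ← hst.inner_apply_left_eq_inner_apply_right hn hB α, hA _ _ (hst.apply_mem_exteriorPower hα)]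
  linear_combination B (st α) (A β) * ((-1) ^ (p * k) * hsign
    - (-1) ^ (p * (n - k)) * neg_one_pow_mul_neg_one_pow (R := ℂ) (p * k))

end SuperAdjoint

/-- let `Vop = ω ∧ ·` be left wedge multiplication by a fixed real form `ω` of
odd degree `2d+1` on the complexified exterior algebra of an oriented odd-dimensional real
inner product space, and `A = Vop^⋆` its super-adjoint with respect to the induced Hermitean
inner product `inn`. Then `A = * ∘ Vop ∘ *` where `*` is the Hodge star `st`, and the odd
operators `i·Vop` and `A` both preserve the odd pairing `⟨α,β⟩ = (α ∧ conj β, Ω)` in the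
super sense: `⟨φ α, β⟩ + (-1)^(deg α · deg φ) ⟨α, φ β⟩ = 0`. -/
theorem stmt8 {n : ℕ} (hn : Odd n) {V : Type*} [AddCommGroup V] [Module ℂ V]
    (b : Module.Basis (Fin n) ℂ V)
    (inn : ExteriorAlgebra ℂ V → ExteriorAlgebra ℂ V → ℂ)
    (inn_addl : ∀ x y z, inn (x + y) z = inn x z + inn y z)
    (inn_addr : ∀ x y z, inn x (y + z) = inn x y + inn x z)
    (inn_sml : ∀ (c : ℂ) (x y), inn (c • x) y = c * inn x y)
    (inn_smr : ∀ (c : ℂ) (x y), inn x (c • y) = (starRingEnd ℂ) c * inn x y)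
    (inn_mon : ∀ s t, inn (cMonomial b s) (cMonomial b t) = if s = t then 1 else 0)
    (cj : ExteriorAlgebra ℂ V →ₛₗ[starRingEnd ℂ] ExteriorAlgebra ℂ V)
    (cj_mon : ∀ s, cj (cMonomial b s) = cMonomial b s)
    (cj_mul : ∀ x y, cj (x * y) = cj x * cj y)
    (st : ExteriorAlgebra ℂ V →ₗ[ℂ] ExteriorAlgebra ℂ V)
    (st_deg : ∀ s : Finset (Fin n),
      st (cMonomial b s) ∈
        (LinearMap.range (ι ℂ : V →ₗ[ℂ] ExteriorAlgebra ℂ V)) ^ (n - s.card))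
    (st_char : ∀ s t : Finset (Fin n), s.card = t.card →
      cMonomial b s * st (cMonomial b t)
        = (if s = t then (1 : ℂ) else 0) • cMonomial b Finset.univ)
    (d : ℕ) (ω : ExteriorAlgebra ℂ V)
    (hω_odd : ω ∈ (LinearMap.range (ι ℂ : V →ₗ[ℂ] ExteriorAlgebra ℂ V)) ^ (2 * d + 1))
    (hω_real : ω ∈ Submodule.span ℝ (Set.range (cMonomial b)))
    (A : ExteriorAlgebra ℂ V →ₗ[ℂ] ExteriorAlgebra ℂ V)
    (hA : ∀ (k : ℕ) (α : ExteriorAlgebra ℂ V),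
      α ∈ (LinearMap.range (ι ℂ : V →ₗ[ℂ] ExteriorAlgebra ℂ V)) ^ k →
      ∀ β, inn (ω * α) β = (-1 : ℂ) ^ ((2 * d + 1) * k) * inn α (A β)) :
    (∀ β, A β = st (ω * st β)) ∧
    (∀ (k : ℕ) (α : ExteriorAlgebra ℂ V),
      α ∈ (LinearMap.range (ι ℂ : V →ₗ[ℂ] ExteriorAlgebra ℂ V)) ^ k →
      ∀ β,
        inn ((Complex.I • (ω * α)) * cj β) (cMonomial b Finset.univ)
          + (-1 : ℂ) ^ ((2 * d + 1) * k) *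
              inn (α * cj (Complex.I • (ω * β))) (cMonomial b Finset.univ) = 0) ∧
    (∀ (k : ℕ) (α : ExteriorAlgebra ℂ V),
      α ∈ (LinearMap.range (ι ℂ : V →ₗ[ℂ] ExteriorAlgebra ℂ V)) ^ k →
      ∀ β,
        inn (A α * cj β) (cMonomial b Finset.univ)
          + (-1 : ℂ) ^ ((2 * d + 1) * k) *
              inn (α * cj (A β)) (cMonomial b Finset.univ) = 0) := by
  let B : ExteriorAlgebra ℂ V →ₗ[ℂ] ExteriorAlgebra ℂ V →ₗ⋆[ℂ] ℂ :=
    LinearMap.mk₂'ₛₗ (RingHom.id ℂ) (starRingEnd ℂ) inn inn_addl inn_sml inn_addr inn_smr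
  have hst : IsHodgeStar b st := ⟨st_deg, st_char⟩
  have hωcj : cj ω = ω := cj.eq_self_of_mem_span_real cj_mon hω_real
  have hA' : IsSuperAdjointMulLeft B (2 * d + 1) ω A := hA
  exact ⟨LinearMap.congr_fun (hA'.unique inn_mon
      (hst.isSuperAdjointMulLeft hn inn_mon cj_mon cj_mul hω_odd hωcj)),
    isSuperSkew_I_smul_mul_left (B.flip (cMonomial b Finset.univ)) cj_mul hω_odd hωcj,
    hA'.isSuperSkew hst hn inn_mon cj_mon cj_mul (odd_two_mul_add_one d) hω_odd hωcj⟩
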